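/- For any e > 0, the set S[e] = { (w,H) : w ∈ R^N, H symmetric traceless, (N/2)·λ_max[w⊗w − H] < e } is a convex, open, and bounded subset of R^N × R^{N×N}_{0,sym}. -/

import Mathlib

open Matrix BigOperators

/-- The largest eigenvalue of a symmetric matrix, via the variational (Rayleigh) characterization. -/
noncomputable def lamMax {N : ℕ} (A : Matrix (Fin N) (Fin N) ℝ) : ℝ :=
  sSup {x : ℝ | ∃ ξ : Fin N → ℝ, (∑ i, ξ i ^ 2) = 1 ∧ x = ξ ⬝ᵥ A.mulVec ξ}

/-- The subspace of symmetric traceless real `N × N` matrices. -/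
def tracelessSym (N : ℕ) : Submodule ℝ (Matrix (Fin N) (Fin N) ℝ) where
  carrier := {H | H.IsSymm ∧ H.trace = 0}
  add_mem' := by
    rintro a b ⟨ha1, ha2⟩ ⟨hb1, hb2⟩
    exact ⟨ha1.add hb1, by simp [Matrix.trace_add, ha2, hb2]⟩
  zero_mem' := by
    constructor
    · simp [Matrix.IsSymm]
    · simp
  smul_mem' := by
    rintro c a ⟨ha1, ha2⟩
    constructor
    · simpa [Matrix.IsSymm, Matrix.transpose_smul] using congrArg (c • ·) ha1
    · simp [Matrix.trace_smul, ha2]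

/-!
`lamMax (w ⊗ w - H)` is the supremum over unit vectors `ξ` of `(w ⬝ᵥ ξ)² - ξ ⬝ᵥ H ξ`, a family of
convex functions of `(w, H)`; hence it is convex, so continuous in finite dimension, and `S[e]` is a
strict sublevel set of it. Testing against `eᵢ` and `eᵢ ± eⱼ` and using `tr H = 0` bounds `wᵢ²` and
every `|Hᵢⱼ|` by `N · lamMax (w ⊗ w - H) < 2e`.
-/

open Set

theorem ConvexOn.ciSup {E ι : Type*} [AddCommGroup E] [Module ℝ E] [Nonempty ι] {s : Set E}
    {f : ι → E → ℝ} (hf : ∀ i, ConvexOn ℝ s (f i))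
    (hbdd : ∀ x ∈ s, BddAbove (range fun i => f i x)) :
    ConvexOn ℝ s fun x => ⨆ i, f i x := by
  refine ⟨(hf (Classical.arbitrary ι)).1, fun x hx y hy a b ha hb hab => ciSup_le fun i => ?_⟩
  exact ((hf i).2 hx hy ha hb hab).trans <| add_le_add
    (smul_le_smul_of_nonneg_left (le_ciSup (hbdd x hx) i) ha)
    (smul_le_smul_of_nonneg_left (le_ciSup (hbdd y hy) i) hb)

variable {N : ℕ}

abbrev UnitVec (N : ℕ) := {ξ : Fin N → ℝ // ∑ i, ξ i ^ 2 = 1}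

instance [NeZero N] : Nonempty (UnitVec N) := ⟨⟨Pi.single 0 1, by simp [Pi.single_apply]⟩⟩

theorem lamMax_eq_ciSup (A : Matrix (Fin N) (Fin N) ℝ) :
    lamMax A = ⨆ ξ : UnitVec N, ξ.1 ⬝ᵥ A *ᵥ ξ.1 := by
  rw [lamMax, iSup]
  congr 1
  ext x
  simp [eq_comm]

theorem abs_le_one_of_sum_sq_eq_one {ξ : Fin N → ℝ} (hξ : ∑ i, ξ i ^ 2 = 1) (i : Fin N) :
    |ξ i| ≤ 1 := by
  rw [← sq_le_one_iff_abs_le_one, ← hξ]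
  exact Finset.single_le_sum (fun j _ => sq_nonneg (ξ j)) (Finset.mem_univ i)

theorem dotProduct_mulVec_le_sum_abs (A : Matrix (Fin N) (Fin N) ℝ) {ξ : Fin N → ℝ}
    (hξ : ∑ i, ξ i ^ 2 = 1) : ξ ⬝ᵥ A *ᵥ ξ ≤ ∑ i, ∑ j, |A i j| := by
  simp only [dotProduct, mulVec, Finset.mul_sum]
  gcongr with i _ j _
  calc ξ i * (A i j * ξ j) ≤ |ξ i| * |A i j| * |ξ j| := by
        rw [← abs_mul, ← abs_mul, ← mul_assoc]; exact le_abs_self _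
    _ ≤ 1 * |A i j| * 1 := by
        gcongr
        exacts [abs_le_one_of_sum_sq_eq_one hξ i, abs_le_one_of_sum_sq_eq_one hξ j]
    _ = |A i j| := by ring

theorem bddAbove_range_dotProduct_mulVec (A : Matrix (Fin N) (Fin N) ℝ) :
    BddAbove (range fun ξ : UnitVec N => ξ.1 ⬝ᵥ A *ᵥ ξ.1) :=
  ⟨_, forall_mem_range.2 fun ξ => dotProduct_mulVec_le_sum_abs A ξ.2⟩

theorem le_lamMax (A : Matrix (Fin N) (Fin N) ℝ) {ξ : Fin N → ℝ} (hξ : ∑ i, ξ i ^ 2 = 1) :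
    ξ ⬝ᵥ A *ᵥ ξ ≤ lamMax A :=
  lamMax_eq_ciSup A ▸ le_ciSup (bddAbove_range_dotProduct_mulVec A) ⟨ξ, hξ⟩

theorem dotProduct_mulVec_le_lamMax_mul (A : Matrix (Fin N) (Fin N) ℝ) (ξ : Fin N → ℝ) :
    ξ ⬝ᵥ A *ᵥ ξ ≤ lamMax A * ∑ i, ξ i ^ 2 := by
  obtain hs | hs := (Finset.sum_nonneg fun i _ => sq_nonneg (ξ i)).eq_or_lt
  · have : ξ = 0 := funext fun i => by
      simpa using (Finset.sum_eq_zero_iff_of_nonneg fun i _ => sq_nonneg (ξ i)).1 hs.symm i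
        (Finset.mem_univ i)
    subst this
    simp
  · set s := ∑ i, ξ i ^ 2
    set r := √s
    have hr : r ^ 2 = s := Real.sq_sqrt hs.le
    have hunit : ∑ i, (r⁻¹ • ξ) i ^ 2 = 1 := by
      simp only [Pi.smul_apply, smul_eq_mul, mul_pow, ← Finset.mul_sum, inv_pow, hr]
      exact inv_mul_cancel₀ hs.ne'
    have := le_lamMax A hunit
    rw [mulVec_smul, dotProduct_smul, smul_dotProduct, smul_eq_mul, smul_eq_mul, ← mul_assoc,
      ← sq, inv_pow, hr, inv_mul_le_iff₀ hs] at this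
    linarith

theorem diag_le_lamMax (A : Matrix (Fin N) (Fin N) ℝ) (i : Fin N) : A i i ≤ lamMax A := by
  simpa using le_lamMax A (ξ := Pi.single i 1) (by simp [Pi.single_apply])

theorem trace_le_mul_lamMax (A : Matrix (Fin N) (Fin N) ℝ) : A.trace ≤ N * lamMax A := by
  simpa [trace] using Finset.sum_le_sum fun i (_ : i ∈ Finset.univ) => diag_le_lamMax A i

theorem apply_add_apply_add_two_mul_abs_le_two_mul_lamMax {A : Matrix (Fin N) (Fin N) ℝ}
    (hA : A.IsSymm) {i j : Fin N} (hij : i ≠ j) : A i i + A j j + 2 * |A i j| ≤ 2 * lamMax A := by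
  have key (s : ℝ) (hs : s ^ 2 = 1) : A i i + A j j + 2 * s * A i j ≤ 2 * lamMax A := by
    have h := dotProduct_mulVec_le_lamMax_mul A (Pi.single i 1 + Pi.single j s)
    have hnorm : ∑ k, (Pi.single i 1 + Pi.single j s : Fin N → ℝ) k ^ 2 = 2 := by
      simp [Pi.single_apply, add_sq, Finset.sum_add_distrib, hij.symm, hs]; norm_num
    rw [hnorm] at h
    simp only [mulVec_add, dotProduct_add, add_dotProduct, mulVec_single, single_dotProduct] at h
    simp [hA.apply i j] at h
    linear_combination h - A j j * hs
  rcases abs_cases (A i j) with ⟨h, -⟩ | ⟨h, -⟩ <;> rw [h]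
  · simpa using key 1 (by norm_num)
  · simpa using key (-1) (by norm_num)


theorem dotProduct_vecMulVec_mulVec (ξ w : Fin N → ℝ) :
    ξ ⬝ᵥ vecMulVec w w *ᵥ ξ = (w ⬝ᵥ ξ) ^ 2 := by
  rw [vecMulVec_mulVec, op_smul_eq_smul, dotProduct_smul, smul_eq_mul, dotProduct_comm, sq]

theorem convexOn_dotProduct_mulVec_vecMulVec_sub (ξ : Fin N → ℝ) :
    ConvexOn ℝ univ fun p : (Fin N → ℝ) × Matrix (Fin N) (Fin N) ℝ =>
      ξ ⬝ᵥ (vecMulVec p.1 p.1 - p.2) *ᵥ ξ := by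
  refine ⟨convex_univ, fun p _ q _ a b ha hb hab => ?_⟩
  simp only [sub_mulVec, dotProduct_sub, dotProduct_vecMulVec_mulVec, Prod.fst_add, Prod.snd_add,
    Prod.smul_fst, Prod.smul_snd, add_dotProduct, smul_dotProduct, add_mulVec, smul_mulVec,
    dotProduct_add, dotProduct_smul, smul_eq_mul]
  -- for `a + b = 1`: `a s² + b t² - (a s + b t)² = a b (s - t)²`
  nlinarith [mul_nonneg ha hb, sq_nonneg (p.1 ⬝ᵥ ξ - q.1 ⬝ᵥ ξ)]

theorem convexOn_lamMax_vecMulVec_sub [NeZero N] :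
    ConvexOn ℝ univ fun p : (Fin N → ℝ) × Matrix (Fin N) (Fin N) ℝ =>
      lamMax (vecMulVec p.1 p.1 - p.2) := by
  simp only [lamMax_eq_ciSup]
  exact ConvexOn.ciSup (fun ξ => convexOn_dotProduct_mulVec_vecMulVec_sub ξ.1)
    fun p _ => bddAbove_range_dotProduct_mulVec _

theorem continuous_lamMax_vecMulVec_sub [NeZero N] :
    Continuous fun p : (Fin N → ℝ) × Matrix (Fin N) (Fin N) ℝ =>
      lamMax (vecMulVec p.1 p.1 - p.2) := by
  let _ : NormedAddCommGroup (Matrix (Fin N) (Fin N) ℝ) := Matrix.normedAddCommGroup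
  let _ : NormedSpace ℝ (Matrix (Fin N) (Fin N) ℝ) := Matrix.normedSpace
  exact continuousOn_univ.mp (convexOn_lamMax_vecMulVec_sub.continuousOn isOpen_univ)

theorem sq_le_mul_lamMax_vecMulVec_sub (w : Fin N → ℝ) {H : Matrix (Fin N) (Fin N) ℝ}
    (hH : H.trace = 0) (i : Fin N) : w i ^ 2 ≤ N * lamMax (vecMulVec w w - H) := by
  have htrace : (vecMulVec w w - H).trace = ∑ k, w k ^ 2 := by
    rw [trace_sub, hH, sub_zero]
    simp [trace, vecMulVec_apply, sq]
  calc w i ^ 2 ≤ ∑ k, w k ^ 2 :=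
        Finset.single_le_sum (fun k _ => sq_nonneg (w k)) (Finset.mem_univ i)
    _ ≤ N * lamMax (vecMulVec w w - H) := htrace ▸ trace_le_mul_lamMax _

theorem abs_apply_le_mul_lamMax_vecMulVec_sub [NeZero N] (w : Fin N → ℝ)
    {H : Matrix (Fin N) (Fin N) ℝ} (hHs : H.IsSymm) (hH : H.trace = 0) (i j : Fin N) :
    |H i j| ≤ N * lamMax (vecMulVec w w - H) := by
  set A := vecMulVec w w - H with hA
  set l := lamMax A
  have hAij (k m : Fin N) : A k m = w k * w m - H k m := by simp [hA, vecMulVec_apply]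
  have hN : (1 : ℝ) ≤ N := by exact_mod_cast NeZero.one_le
  have hl : 0 ≤ l := by
    have := (sq_nonneg (w 0)).trans (sq_le_mul_lamMax_vecMulVec_sub w hH 0)
    exact nonneg_of_mul_nonneg_right this (by linarith)
  have hdiag_lb (k : Fin N) : -l ≤ H k k := by
    linarith [diag_le_lamMax A k, hAij k k, mul_self_nonneg (w k)]
  have hdiag_ub (k : Fin N) : H k k ≤ N * l - l := by
    have hsum : ∑ m, (H m m + l) = N * l := by
      simpa [Finset.sum_add_distrib, trace] using hH
    have := Finset.single_le_sum (fun m _ => neg_le_iff_add_nonneg.1 (hdiag_lb m))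
      (Finset.mem_univ k)
    linarith
  rcases eq_or_ne i j with rfl | hij
  · rw [abs_le]; constructor <;> nlinarith [hdiag_lb i, hdiag_ub i]
  · have hAs : A.IsSymm := IsSymm.sub (transpose_vecMulVec w w) hHs
    have := apply_add_apply_add_two_mul_abs_le_two_mul_lamMax hAs hij
    rw [hAij, hAij, hAij] at this
    rw [abs_le]; constructor <;>
      nlinarith [le_abs_self (w i * w j - H i j), neg_abs_le (w i * w j - H i j),
        sq_nonneg (w i - w j), sq_nonneg (w i + w j), hdiag_ub i, hdiag_ub j]
theorem stmt2_general (N : ℕ) (hN : 1 ≤ N) (e : ℝ) :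
    let S : Set ((Fin N → ℝ) × (tracelessSym N)) :=
      {p | (N : ℝ) / 2 * lamMax (vecMulVec p.1 p.1 - (p.2 : Matrix (Fin N) (Fin N) ℝ)) < e}
    Convex ℝ S ∧ IsOpen S ∧
      ∃ C : ℝ, ∀ p ∈ S, (∀ i, |p.1 i| ≤ C) ∧
        ∀ i j, |(p.2 : Matrix (Fin N) (Fin N) ℝ) i j| ≤ C := by
  intro S
  have : NeZero N := ⟨by omega⟩
  let L := (LinearMap.id : (Fin N → ℝ) →ₗ[ℝ] _).prodMap (tracelessSym N).subtype
  refine ⟨?_, ?_, ?_⟩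
  · have := ((convexOn_lamMax_vecMulVec_sub.comp_linearMap L).smul
      (by positivity : (0 : ℝ) ≤ N / 2)).convex_lt e
    simp only [preimage_univ, sep_univ] at this
    exact this
  · have hL : Continuous fun p : (Fin N → ℝ) × tracelessSym N =>
        (p.1, (p.2 : Matrix (Fin N) (Fin N) ℝ)) :=
      continuous_fst.prodMk (continuous_subtype_val.comp continuous_snd)
    have hcont := continuous_lamMax_vecMulVec_sub.comp hL
    simp only [Function.comp_def] at hcont
    exact isOpen_lt (continuous_const.mul hcont) continuous_const
  · refine ⟨max √(2 * e) (2 * e), fun ⟨w, H, hHs, hH⟩ hp => ?_⟩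
    have hlam : N * lamMax (vecMulVec w w - H) < 2 * e := by
      change (N : ℝ) / 2 * _ < e at hp
      linarith
    exact ⟨fun i => (Real.abs_le_sqrt ((sq_le_mul_lamMax_vecMulVec_sub w hH i).trans
        hlam.le)).trans (le_max_left _ _),
      fun i j => ((abs_apply_le_mul_lamMax_vecMulVec_sub w hHs hH i j).trans hlam.le).trans
        (le_max_right _ _)⟩

theorem stmt2 (N : ℕ) (hN : 1 ≤ N) (e : ℝ) (he : 0 < e) :
    let S : Set ((Fin N → ℝ) × (tracelessSym N)) :=
      {p | (N : ℝ) / 2 * lamMax (vecMulVec p.1 p.1 - (p.2 : Matrix (Fin N) (Fin N) ℝ)) < e}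
    Convex ℝ S ∧ IsOpen S ∧
      ∃ C : ℝ, ∀ p ∈ S, (∀ i, |p.1 i| ≤ C) ∧
        ∀ i j, |(p.2 : Matrix (Fin N) (Fin N) ℝ) i j| ≤ C :=
  stmt2_general N hN e
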